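/- arXiv:1709.02400 — 3 statements merged into one kernel-verified Lean document; each statement's English description precedes it below -/
import Mathlib

section
/- Let E be a real Banach lattice and let T : E → E be a positive bounded linear operator which is mean ergodic with mean ergodic projection 0 (the Cesàro means (1/n) · Σ_{k=0}^{n-1} T^k x converge in norm to 0 for every x ∈ E). Let T* denote the adjoint operator on the continuous dual E'. Then for every real λ with |λ| = 1, the only functional φ ∈ E' satisfying T* φ = λ · φ is φ = 0. -/
open Filter

/-!
Iterating `φ ∘ T = λ φ` gives `φ (T^k x) = λ^k φ x`. Hence for `x ≥ 0` and every `n`,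
`φ x` is the value of `φ` at the twisted mean `n⁻¹ • ∑_{k<n} λ^k • T^k x`. Since `λ = ±1` and
`T^k x ≥ 0`, the twisted mean is dominated in modulus by the Cesàro mean of `x`, whose norm
tends to `0`; so `φ` vanishes on the positive cone, which spans `E`.
-/

section Iterates

variable {𝕜 E : Type*} [NontriviallyNormedField 𝕜] [NormedAddCommGroup E] [NormedSpace 𝕜 E]

theorem ContinuousLinearMap.apply_pow_apply_of_comp_eq_smul {T : E →L[𝕜] E} {φ : E →L[𝕜] 𝕜}
    {l : 𝕜} (hφ : φ.comp T = l • φ) (k : ℕ) (x : E) : φ ((T ^ k) x) = l ^ k * φ x := by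
  induction k generalizing x with
  | zero => simp
  | succ k ih =>
    rw [pow_succ, mul_apply_eq_comp, ih, ← ContinuousLinearMap.comp_apply, hφ]
    simp only [smul_apply, smul_eq_mul]
    ring

end Iterates

section Lattice

variable {E : Type*} [AddCommGroup E] [Lattice E]

theorem abs_smul_eq_abs_of_abs_eq_one {R : Type*} [Ring R] [LinearOrder R] [IsOrderedRing R]
    [Module R E] {a : R} (ha : |a| = 1) (y : E) : |a • y| = |y| := by
  rcases abs_eq zero_le_one |>.mp ha with rfl | rfl
  · rw [one_smul]
  · rw [neg_one_smul, abs_neg]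

variable [IsOrderedAddMonoid E]

theorem map_eq_zero_of_forall_nonneg_map_eq_zero {F G : Type*} [AddCommGroup F] [FunLike G E F]
    [AddMonoidHomClass G E F] {φ : G} (h : ∀ x, 0 ≤ x → φ x = 0) (x : E) : φ x = 0 := by
  rw [← posPart_sub_negPart x, map_sub, h _ (posPart_nonneg x), h _ (negPart_nonneg x), sub_zero]

end Lattice

theorem ContinuousLinearMap.pow_apply_nonneg {R M : Type*} [Semiring R] [TopologicalSpace M]
    [AddCommMonoid M] [Module R M] [LE M] {T : M →L[R] M} (hT : ∀ x, 0 ≤ x → 0 ≤ T x) (k : ℕ)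
    {x : M} (hx : 0 ≤ x) : 0 ≤ (T ^ k) x := by
  induction k with
  | zero => simpa using hx
  | succ k ih => rw [pow_succ', mul_apply_eq_comp]; exact hT _ ih

section PositiveOperator

variable {E : Type*} [NormedAddCommGroup E] [Lattice E] [IsOrderedAddMonoid E] [NormedSpace ℝ E]
  {T : E →L[ℝ] E}

theorem abs_sum_pow_smul_pow_apply_le (hT : ∀ x, 0 ≤ x → 0 ≤ T x) {l : ℝ} (hl : |l| = 1)
    (s : Finset ℕ) {x : E} (hx : 0 ≤ x) : |∑ k ∈ s, l ^ k • (T ^ k) x| ≤ ∑ k ∈ s, (T ^ k) x := by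
  refine (Finset.le_sum_of_subadditive _ abs_zero.le abs_add_le s _).trans_eq ?_
  refine Finset.sum_congr rfl fun k _ => ?_
  rw [abs_smul_eq_abs_of_abs_eq_one (by rw [abs_pow, hl, one_pow]),
    abs_of_nonneg (T.pow_apply_nonneg hT k hx)]

theorem abs_apply_le_opNorm_mul_norm_cesaroMean [HasSolidNorm E] (hT : ∀ x, 0 ≤ x → 0 ≤ T x)
    {l : ℝ} (hl : |l| = 1) {φ : E →L[ℝ] ℝ} (hφ : φ.comp T = l • φ) {n : ℕ} (hn : n ≠ 0) {x : E}
    (hx : 0 ≤ x) : |φ x| ≤ ‖φ‖ * ‖(n : ℝ)⁻¹ • ∑ k ∈ Finset.range n, (T ^ k) x‖ := by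
  have hφ_twisted : φ ((n : ℝ)⁻¹ • ∑ k ∈ Finset.range n, l ^ k • (T ^ k) x) = φ x := by
    have hl_sq : l * l = 1 := by rw [← abs_mul_abs_self, hl, one_mul]
    simp only [map_smul, map_sum, ContinuousLinearMap.apply_pow_apply_of_comp_eq_smul hφ,
      smul_eq_mul, ← mul_assoc, ← mul_pow, hl_sq, one_pow, one_mul, Finset.sum_const,
      Finset.card_range, nsmul_eq_mul]
    field_simp
  calc |φ x| = ‖φ ((n : ℝ)⁻¹ • ∑ k ∈ Finset.range n, l ^ k • (T ^ k) x)‖ := by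
        rw [hφ_twisted, Real.norm_eq_abs]
    _ ≤ ‖φ‖ * ‖(n : ℝ)⁻¹ • ∑ k ∈ Finset.range n, l ^ k • (T ^ k) x‖ := φ.le_opNorm _
    _ ≤ ‖φ‖ * ‖(n : ℝ)⁻¹ • ∑ k ∈ Finset.range n, (T ^ k) x‖ := by
        gcongr ‖φ‖ * ?_
        rw [norm_smul, norm_smul]
        gcongr
        refine norm_le_norm_of_abs_le_abs ?_
        rw [abs_of_nonneg (Finset.sum_nonneg fun k _ => T.pow_apply_nonneg hT k hx)]
        exact abs_sum_pow_smul_pow_apply_le hT hl _ hx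

end PositiveOperator

theorem adjoint_has_no_unimodular_eigenvalues_general
    (E : Type*) [NormedAddCommGroup E] [Lattice E] [HasSolidNorm E]
    [IsOrderedAddMonoid E] [NormedSpace ℝ E]
    (T : E →L[ℝ] E)
    (hpos : ∀ x : E, 0 ≤ x → 0 ≤ T x)
    (hme : ∀ x : E,
      Tendsto (fun n : ℕ => (n : ℝ)⁻¹ • ∑ k ∈ Finset.range n, (T ^ k) x) atTop (nhds 0))
    (l : ℝ) (hl : |l| = 1) (φ : E →L[ℝ] ℝ) (hφ : φ.comp T = l • φ) :
    φ = 0 := by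
  ext y
  refine map_eq_zero_of_forall_nonneg_map_eq_zero (fun x hx => ?_) y
  have hbound : ∀ᶠ n : ℕ in atTop,
      |φ x| ≤ ‖φ‖ * ‖(n : ℝ)⁻¹ • ∑ k ∈ Finset.range n, (T ^ k) x‖ :=
    (eventually_ne_atTop 0).mono fun n hn =>
      abs_apply_le_opNorm_mul_norm_cesaroMean hpos hl hφ hn hx
  have hlim : Tendsto (fun n : ℕ => ‖φ‖ * ‖(n : ℝ)⁻¹ • ∑ k ∈ Finset.range n, (T ^ k) x‖)
      atTop (nhds 0) := by
    simpa using (hme x).norm.const_mul ‖φ‖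
  exact abs_nonpos_iff.mp (ge_of_tendsto hlim hbound)

/-- Let `E` be a real Banach lattice and `T : E → E` a positive bounded
linear operator which is mean ergodic with mean ergodic projection `0`. Then for every
real `λ` with `|λ| = 1`, the only continuous functional `φ` with `T* φ = λ • φ`
(where `T* φ = φ ∘ T`) is `φ = 0`. -/
theorem adjoint_has_no_unimodular_eigenvalues
    (E : Type*) [NormedAddCommGroup E] [Lattice E] [HasSolidNorm E]
    [IsOrderedAddMonoid E] [NormedSpace ℝ E] [CompleteSpace E]
    [PosSMulStrictMono ℝ E] [PosSMulReflectLT ℝ E]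
    (T : E →L[ℝ] E)
    (hpos : ∀ x : E, 0 ≤ x → 0 ≤ T x)
    (hme : ∀ x : E,
      Tendsto (fun n : ℕ => (n : ℝ)⁻¹ • ∑ k ∈ Finset.range n, (T ^ k) x) atTop (nhds 0))
    (l : ℝ) (hl : |l| = 1) (φ : E →L[ℝ] ℝ) (hφ : φ.comp T = l • φ) :
    φ = 0 :=
  adjoint_has_no_unimodular_eigenvalues_general E T hpos hme l hl φ hφ
end

section
/- Fix an integer j ≥ 1 and let M : ℓ∞ → ℓ∞ be the multiplication operator defined by (M x)_m = (1 − 1/m)^{2j} · x_m for m ≥ 1. Then M is a positive bounded linear operator with ‖M‖ ≤ 1, its only fixed point is 0, and M is not mean ergodic: there exists x ∈ ℓ∞ for which the Cesàro means (1/n) · Σ_{k=0}^{n-1} M^k x do not converge in norm. -/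
open Filter BoundedContinuousFunction Topology

/-!
Multiplication by a sequence `a` with `|a m| < 1` has Cesàro means of `1` equal to
`m ↦ (1/n) ∑_{k<n} a m ^ k`, which tend to `0` pointwise. Since `a m → 1`, each of these
means has sup-norm at least `1`, so they cannot converge in norm (the only possible limit
being `0`).
-/

noncomputable def cesaroMean {E : Type*} [TopologicalSpace E] [AddCommMonoid E] [Module ℝ E]
    (T : E →L[ℝ] E) (x : E) (n : ℕ) : E :=
  (n : ℝ)⁻¹ • ∑ k ∈ Finset.range n, (T ^ k) x

section MultiplicationOperator

variable {α : Type*} [TopologicalSpace α] {a : α → ℝ} {M : (α →ᵇ ℝ) →L[ℝ] (α →ᵇ ℝ)}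

theorem pow_apply_of_mul_apply (hM : ∀ x m, M x m = a m * x m) (k : ℕ) (x : α →ᵇ ℝ) (m : α) :
    (M ^ k) x m = a m ^ k * x m := by
  induction k generalizing x with
  | zero => simp
  | succ k ih => rw [pow_succ, mul_apply_eq_comp, ih, hM, pow_succ, mul_assoc]

theorem cesaroMean_one_apply (hM : ∀ x m, M x m = a m * x m) (n : ℕ) (m : α) :
    cesaroMean M 1 n m = (n : ℝ)⁻¹ * ∑ k ∈ Finset.range n, a m ^ k := by
  simp only [cesaroMean, coe_smul, coe_sum, Finset.sum_apply, smul_eq_mul,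
    pow_apply_of_mul_apply hM, coe_one, Pi.one_apply, mul_one]

theorem nonneg_of_mul_apply (hM : ∀ x m, M x m = a m * x m) (ha : ∀ m, 0 ≤ a m)
    {x : α →ᵇ ℝ} (hx : 0 ≤ x) : 0 ≤ M x :=
  fun m => by simpa [hM] using mul_nonneg (ha m) (hx m)

theorem opNorm_le_one_of_mul_apply (hM : ∀ x m, M x m = a m * x m) (ha : ∀ m, |a m| ≤ 1) :
    ‖M‖ ≤ 1 := by
  refine M.opNorm_le_bound zero_le_one fun x => (norm_le (by positivity)).2 fun m => ?_
  calc ‖M x m‖ = |a m| * ‖x m‖ := by rw [hM, norm_mul, Real.norm_eq_abs]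
    _ ≤ 1 * ‖x‖ := mul_le_mul (ha m) (norm_coe_le_norm x m) (norm_nonneg _) zero_le_one

theorem eq_zero_of_mul_apply_of_fixed (hM : ∀ x m, M x m = a m * x m) (ha : ∀ m, a m ≠ 1)
    {x : α →ᵇ ℝ} (hx : M x = x) : x = 0 := by
  ext m
  have hfix : (a m - 1) * x m = 0 := by
    rw [sub_mul, one_mul, ← hM, hx, sub_self]
  simpa [sub_ne_zero.2 (ha m)] using hfix

theorem tendsto_cesaroMean_one_apply (hM : ∀ x m, M x m = a m * x m) {m : α} (ha : |a m| < 1) :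
    Tendsto (fun n => cesaroMean M 1 n m) atTop (𝓝 0) := by
  simpa only [cesaroMean_one_apply hM] using (tendsto_pow_atTop_nhds_zero_of_abs_lt_one ha).cesaro

theorem one_le_norm_cesaroMean_one (hM : ∀ x m, M x m = a m * x m) {l : Filter α} [l.NeBot]
    (hl : Tendsto a l (𝓝 1)) {n : ℕ} (hn : n ≠ 0) : 1 ≤ ‖cesaroMean M 1 n‖ := by
  have hlim : Tendsto (fun m => cesaroMean M 1 n m) l (𝓝 1) := by
    have := (tendsto_finsetSum (Finset.range n) fun k _ => hl.pow k).const_mul (n : ℝ)⁻¹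
    simpa only [cesaroMean_one_apply hM, one_pow, Finset.sum_const, Finset.card_range,
      nsmul_eq_mul, mul_one, inv_mul_cancel₀ (Nat.cast_ne_zero (R := ℝ) |>.2 hn)] using this
  exact le_of_tendsto hlim (Eventually.of_forall fun m => (cesaroMean M 1 n).apply_le_norm m)

theorem not_tendsto_cesaroMean_one (hM : ∀ x m, M x m = a m * x m) (ha : ∀ m, |a m| < 1)
    {l : Filter α} [l.NeBot] (hl : Tendsto a l (𝓝 1)) :
    ¬ ∃ y, Tendsto (cesaroMean M 1) atTop (𝓝 y) := by
  rintro ⟨y, hy⟩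
  have hy0 : y = 0 := by
    ext m
    exact tendsto_nhds_unique ((continuous_eval_const m).tendsto y |>.comp hy)
      (tendsto_cesaroMean_one_apply hM (ha m))
  subst hy0
  have hnorm : Tendsto (fun n => ‖cesaroMean M 1 n‖) atTop (𝓝 0) := by
    simpa using hy.norm
  have hbound : ∀ᶠ n in atTop, 1 ≤ ‖cesaroMean M 1 n‖ :=
    (eventually_ne_atTop 0).mono fun n hn => one_le_norm_cesaroMean_one hM hl hn
  exact zero_lt_one.not_ge (ge_of_tendsto hnorm hbound)

end MultiplicationOperator

theorem one_sub_one_div_succ_pow_nonneg (p m : ℕ) : 0 ≤ (1 - 1 / (m + 1 : ℝ)) ^ p := by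
  have : 1 / (m + 1 : ℝ) ≤ 1 := div_le_one_of_le₀ (by simp) (by positivity)
  exact pow_nonneg (by linarith) p

theorem one_sub_one_div_succ_pow_lt_one {p : ℕ} (hp : p ≠ 0) (m : ℕ) :
    (1 - 1 / (m + 1 : ℝ)) ^ p < 1 := by
  have : 0 < 1 / (m + 1 : ℝ) := by positivity
  exact pow_lt_one₀ (by simpa using one_sub_one_div_succ_pow_nonneg 1 m) (by linarith) hp

theorem tendsto_one_sub_one_div_succ_pow (p : ℕ) :
    Tendsto (fun m : ℕ => (1 - 1 / (m + 1 : ℝ)) ^ p) atTop (𝓝 1) := by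
  simpa using ((tendsto_const_nhds (x := (1 : ℝ))).sub tendsto_one_div_add_atTop_nhds_zero_nat).pow p

/-- Fix `j ≥ 1` and let `M` be the multiplication operator on `ℓ∞`
(modelled as `ℕ →ᵇ ℝ`, the index `m ∈ ℕ` corresponding to `m + 1`) given by
`(M x)_m = (1 − 1/m)^{2j} · x_m`. Then `M` is a positive bounded linear operator with
`‖M‖ ≤ 1`, its only fixed point is `0`, and `M` is not mean ergodic: for some `x` the
Cesàro means `(1/n) ∑_{k<n} M^k x` do not converge in norm. -/
theorem multiplication_operator_not_mean_ergodic
    (j : ℕ) (hj : 1 ≤ j)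
    (M : (ℕ →ᵇ ℝ) →L[ℝ] (ℕ →ᵇ ℝ))
    (hM : ∀ (x : ℕ →ᵇ ℝ) (m : ℕ), M x m = (1 - 1 / (m + 1 : ℝ)) ^ (2 * j) * x m) :
    (∀ x : ℕ →ᵇ ℝ, 0 ≤ x → 0 ≤ M x) ∧
    ‖M‖ ≤ 1 ∧
    (∀ x : ℕ →ᵇ ℝ, M x = x → x = 0) ∧
    (∃ x : ℕ →ᵇ ℝ, ¬ ∃ y : ℕ →ᵇ ℝ,
      Tendsto (fun n : ℕ => (n : ℝ)⁻¹ • ∑ k ∈ Finset.range n, (M ^ k) x) atTop (nhds y)) := by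
  have hp : 2 * j ≠ 0 := by omega
  have ha0 := one_sub_one_div_succ_pow_nonneg (2 * j)
  have ha1 := one_sub_one_div_succ_pow_lt_one hp
  have habs : ∀ m : ℕ, |(1 - 1 / (m + 1 : ℝ)) ^ (2 * j)| < 1 := fun m =>
    abs_lt.2 ⟨by linarith [ha0 m], ha1 m⟩
  exact ⟨fun _ => nonneg_of_mul_apply hM ha0,
    opNorm_le_one_of_mul_apply hM fun m => (habs m).le,
    fun _ => eq_zero_of_mul_apply_of_fixed hM fun m => (ha1 m).ne,
    1, not_tendsto_cesaroMean_one hM habs (tendsto_one_sub_one_div_succ_pow (2 * j))⟩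
end

section
/- Let T : c₀ → c₀ be a positive bounded linear operator and let e_k denote the k-th canonical unit sequence. Then ‖T‖ = sup_{v∈ℕ} Σ_{k=1}^∞ (T e_k)_v. -/
/-!
Testing `T` on the sums `∑_{k<N} e_k`, which have norm at most `1`, bounds every row sum
`∑_k (T e_k)_v` by `‖T‖`. Conversely, positivity gives `|(T x_N)_v| ≤ ‖x‖ ∑_k (T e_k)_v` for the
truncations `x_N = ∑_{k<N} x_k e_k`; since `x` vanishes at infinity these converge to `x` in `c₀`,
so the bound passes to `T x` by continuity.
-/

open scoped ZeroAtInfty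
open Finset Filter Topology

namespace ZeroAtInftyContinuousMap

section Norm

variable {α β : Type*} [TopologicalSpace α] [NormedAddCommGroup β]

theorem norm_apply_le (f : C₀(α, β)) (x : α) : ‖f x‖ ≤ ‖f‖ := by
  simpa only [norm_toBCF_eq_norm, toBCF_apply] using f.toBCF.norm_coe_le_norm x

theorem norm_le_of_forall_norm_apply_le {f : C₀(α, β)} {C : ℝ} (hC : 0 ≤ C)
    (h : ∀ x, ‖f x‖ ≤ C) : ‖f‖ ≤ C := by
  rw [← norm_toBCF_eq_norm]
  exact (BoundedContinuousFunction.norm_le hC).2 h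

end Norm

instance {α β : Type*} [TopologicalSpace α] [PseudoMetricSpace β] [Zero β] :
    ContinuousEvalConst C₀(α, β) α β where
  continuous_eval_const x :=
    (continuous_eval_const (F := BoundedContinuousFunction α β) x).comp isometry_toBCF.continuous

theorem sum_apply {α β ι : Type*} [TopologicalSpace α] [TopologicalSpace β] [AddCommMonoid β]
    [ContinuousAdd β] (s : Finset ι) (f : ι → C₀(α, β)) (x : α) :
    (∑ i ∈ s, f i) x = ∑ i ∈ s, f i x :=
  map_sum (⟨⟨fun g => g x, rfl⟩, fun _ _ => rfl⟩ : C₀(α, β) →+ β) f s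

theorem tendsto_atTop_zero {β : Type*} [TopologicalSpace β] [Zero β] (f : C₀(ℕ, β)) :
    Tendsto f atTop (𝓝 0) :=
  cocompact_eq_atTop (α := ℕ) ▸ zero_at_infty f

end ZeroAtInftyContinuousMap

section UnitVectors

variable {e : ℕ → C₀(ℕ, ℝ)} (he : ∀ k n : ℕ, e k n = if n = k then 1 else 0)
include he

theorem sum_range_smul_unit_apply (c : ℕ → ℝ) (N m : ℕ) :
    (∑ k ∈ range N, c k • e k) m = if m < N then c m else 0 := by
  simp [ZeroAtInftyContinuousMap.sum_apply, he]

theorem norm_sum_range_unit_le_one (N : ℕ) : ‖∑ k ∈ range N, e k‖ ≤ 1 := by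
  refine ZeroAtInftyContinuousMap.norm_le_of_forall_norm_apply_le zero_le_one fun m => ?_
  have := sum_range_smul_unit_apply he 1 N m
  simp only [Pi.one_apply, one_smul] at this
  rw [this]
  split_ifs <;> simp

theorem tendsto_sum_range_smul_unit (x : C₀(ℕ, ℝ)) :
    Tendsto (fun N => ∑ k ∈ range N, x k • e k) atTop (𝓝 x) := by
  refine Metric.tendsto_atTop.2 fun ε hε => ?_
  obtain ⟨N, hN⟩ := Metric.tendsto_atTop.1 x.tendsto_atTop_zero (ε / 2) (half_pos hε)
  refine ⟨N, fun n hn => ?_⟩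
  rw [dist_eq_norm]
  refine (ZeroAtInftyContinuousMap.norm_le_of_forall_norm_apply_le (half_pos hε).le
    fun m => ?_).trans_lt (half_lt_self hε)
  rw [ZeroAtInftyContinuousMap.coe_sub, Pi.sub_apply, sum_range_smul_unit_apply he]
  split_ifs with hm
  · simpa using (half_pos hε).le
  · simpa using (hN m (by omega)).le

end UnitVectors

section PositiveOperator

variable (T : C₀(ℕ, ℝ) →L[ℝ] C₀(ℕ, ℝ)) {e : ℕ → C₀(ℕ, ℝ)}
  (he : ∀ k n : ℕ, e k n = if n = k then 1 else 0)
include he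

theorem sum_range_apply_unit_le_opNorm (N v : ℕ) : ∑ k ∈ range N, T (e k) v ≤ ‖T‖ :=
  calc ∑ k ∈ range N, T (e k) v
      = T (∑ k ∈ range N, e k) v := by rw [map_sum, ZeroAtInftyContinuousMap.sum_apply]
    _ ≤ ‖T (∑ k ∈ range N, e k)‖ :=
        (Real.le_norm_self _).trans (ZeroAtInftyContinuousMap.norm_apply_le _ v)
    _ ≤ ‖T‖ * ‖∑ k ∈ range N, e k‖ := T.le_opNorm _
    _ ≤ ‖T‖ := mul_le_of_le_one_right (norm_nonneg T) (norm_sum_range_unit_le_one he N)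

variable {T} (hT : ∀ x : C₀(ℕ, ℝ), (∀ k : ℕ, 0 ≤ x k) → ∀ k : ℕ, 0 ≤ T x k)
include hT

theorem apply_unit_nonneg (k v : ℕ) : 0 ≤ T (e k) v :=
  hT (e k) (fun n => by rw [he]; positivity) v

theorem summable_apply_unit (v : ℕ) : Summable fun k => T (e k) v :=
  summable_of_sum_range_le (apply_unit_nonneg he hT · v) (sum_range_apply_unit_le_opNorm T he · v)

theorem tsum_apply_unit_le_opNorm (v : ℕ) : ∑' k, T (e k) v ≤ ‖T‖ :=
  (summable_apply_unit he hT v).tsum_le_of_sum_range_le (sum_range_apply_unit_le_opNorm T he · v)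

theorem norm_apply_sum_range_smul_unit_le (x : C₀(ℕ, ℝ)) (N v : ℕ) :
    ‖T (∑ k ∈ range N, x k • e k) v‖ ≤ ‖x‖ * ∑' k, T (e k) v :=
  calc ‖T (∑ k ∈ range N, x k • e k) v‖
      = ‖∑ k ∈ range N, x k * T (e k) v‖ := by
        simp only [map_sum, map_smul, ZeroAtInftyContinuousMap.sum_apply,
          ZeroAtInftyContinuousMap.coe_smul, Pi.smul_apply, smul_eq_mul]
    _ ≤ ∑ k ∈ range N, ‖x k‖ * T (e k) v := by
        refine norm_sum_le_of_le _ fun k _ => ?_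
        rw [norm_mul, Real.norm_of_nonneg (apply_unit_nonneg he hT k v)]
    _ ≤ ∑ k ∈ range N, ‖x‖ * T (e k) v := by
        gcongr with k
        · exact apply_unit_nonneg he hT k v
        · exact ZeroAtInftyContinuousMap.norm_apply_le x k
    _ ≤ ‖x‖ * ∑' k, T (e k) v := by
        rw [← mul_sum]
        gcongr
        exact (summable_apply_unit he hT v).sum_le_tsum _ fun k _ => apply_unit_nonneg he hT k v

theorem norm_apply_le_norm_mul_tsum (x : C₀(ℕ, ℝ)) (v : ℕ) :
    ‖T x v‖ ≤ ‖x‖ * ∑' k, T (e k) v := by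
  have hlim : Tendsto (fun N => ‖T (∑ k ∈ range N, x k • e k) v‖) atTop (𝓝 ‖T x v‖) :=
    ((continuous_eval_const v).comp T.continuous).norm.continuousAt.tendsto.comp
      (tendsto_sum_range_smul_unit he x)
  exact le_of_tendsto' hlim (norm_apply_sum_range_smul_unit_le he hT x · v)

end PositiveOperator

/-- Let `T` be a positive bounded linear operator on `c₀ = C₀(ℕ, ℝ)`
and let `e k` denote the `k`-th canonical unit sequence. Then
`‖T‖ = sup_v ∑_k (T e_k)_v`. -/
theorem norm_of_positive_operator_on_c0
    (T : C₀(ℕ, ℝ) →L[ℝ] C₀(ℕ, ℝ))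
    (hT : ∀ x : C₀(ℕ, ℝ), (∀ k : ℕ, 0 ≤ x k) → ∀ k : ℕ, 0 ≤ T x k)
    (e : ℕ → C₀(ℕ, ℝ)) (he : ∀ k n : ℕ, e k n = if n = k then 1 else 0) :
    ‖T‖ = ⨆ v : ℕ, ∑' k : ℕ, T (e k) v := by
  have hbdd : BddAbove (Set.range fun v => ∑' k, T (e k) v) :=
    ⟨‖T‖, Set.forall_mem_range.2 (tsum_apply_unit_le_opNorm he hT)⟩
  have hsup_nonneg : 0 ≤ ⨆ v : ℕ, ∑' k : ℕ, T (e k) v :=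
    (tsum_nonneg (apply_unit_nonneg he hT · 0)).trans (le_ciSup hbdd 0)
  refine le_antisymm (T.opNorm_le_bound hsup_nonneg fun x => ?_)
    (ciSup_le (tsum_apply_unit_le_opNorm he hT))
  refine ZeroAtInftyContinuousMap.norm_le_of_forall_norm_apply_le (by positivity) fun v => ?_
  calc ‖T x v‖ ≤ ‖x‖ * ∑' k, T (e k) v := norm_apply_le_norm_mul_tsum he hT x v
    _ ≤ ‖x‖ * ⨆ v : ℕ, ∑' k : ℕ, T (e k) v := by gcongr; exact le_ciSup hbdd v
    _ = (⨆ v : ℕ, ∑' k : ℕ, T (e k) v) * ‖x‖ := mul_comm _ _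
end
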